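/- arXiv:1208.2759 — 3 statements merged into one kernel-verified Lean document; each statement's English description precedes it below -/
import Mathlib

section
/- For any fixed α ∈ [0,1], n ∈ ℤ, and ρ, ρ' ∈ ℝ, the number of occurrences of 0 among s_{ρ,α}(p), …, s_{ρ,α}(q) and the number of occurrences of 0 among s_{ρ',α}(p), …, s_{ρ',α}(q) differ by at most 1, for all integers p ≤ q. That is, two Sturmian words with the same slope are at distance at most one in the balance metric d(u,v) = sup_{p≤q} ||u(p)…u(q)|₀ − |v(p)…v(q)|₀|. -/
/-!
Since `⌊x + α⌋ - ⌊x⌋` is `0` or `1` according as `fract x < 1 - α`, the letter `sturm ρ α n` is `0`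
exactly when `⌊ρ + (n + 1)α⌋ = ⌊ρ + nα⌋`, so the zeros in `[p, q]` telescope to
`(q + 1 - p) - (⌊ρ + (q + 1)α⌋ - ⌊ρ + pα⌋)`. The difference of the two counts is therefore
`(⌊ρ' + x⌋ - ⌊ρ + x⌋) - (⌊ρ' + y⌋ - ⌊ρ + y⌋)`, and both brackets are integers in the open
interval `(ρ' - ρ - 1, ρ' - ρ + 1)` of length `2`.
-/

/-- The Sturmian word of intercept `ρ` and slope `α`: letter `0` iff `(ρ + nα) mod 1 ∈ [0, 1-α)`. -/
noncomputable def sturm (ρ α : ℝ) (n : ℤ) : Fin 2 :=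
  if Int.fract (ρ + n * α) < 1 - α then 0 else 1

/-- Number of occurrences of the letter `0` in `u(p)…u(q)`. -/
noncomputable def zeroCount (u : ℤ → Fin 2) (p q : ℤ) : ℤ :=
  (((Finset.Icc p q).filter (fun i => u i = 0)).card : ℤ)

/-- The balance distance between `u` and `v` is at most one. -/
def distLE1 (u v : ℤ → Fin 2) : Prop :=
  ∀ p q : ℤ, p ≤ q → |zeroCount u p q - zeroCount v p q| ≤ 1

lemma Int.floor_add_sub_floor_eq_ite {R : Type*} [CommRing R] [LinearOrder R]
    [IsStrictOrderedRing R] [FloorRing R] {α : R} (hα0 : 0 ≤ α) (hα1 : α ≤ 1) (x : R) :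
    ⌊x + α⌋ - ⌊x⌋ = if Int.fract x < 1 - α then 0 else 1 := by
  have hsplit : ⌊x + α⌋ = ⌊Int.fract x + α⌋ + ⌊x⌋ := by
    rw [← Int.floor_add_intCast, add_right_comm, Int.fract_add_floor]
  have := Int.fract_nonneg x
  have := Int.fract_lt_one x
  rw [hsplit, add_sub_cancel_right]
  split_ifs with h
  · exact Int.floor_eq_zero_iff.mpr ⟨by linarith, by linarith⟩
  · have h := not_lt.mp h
    rw [Int.floor_eq_iff]
    push_cast
    constructor <;> linarith

lemma zeroCount_add_one (u : ℤ → Fin 2) {p q : ℤ} (h : p ≤ q + 1) :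
    zeroCount u p (q + 1) = zeroCount u p q + if u (q + 1) = 0 then 1 else 0 := by
  unfold zeroCount
  rw [← Finset.insert_Icc_right_eq_Icc_add_one h, Finset.filter_insert]
  split_ifs
  · rw [Finset.card_insert_of_notMem (by simp), Nat.cast_succ]
  · rw [add_zero]

lemma zeroCount_sub_one (u : ℤ → Fin 2) (p : ℤ) : zeroCount u p (p - 1) = 0 := by
  simp [zeroCount]

lemma ite_sturm_eq_one_sub_floor_sub_floor {α : ℝ} (hα0 : 0 ≤ α) (hα1 : α ≤ 1) (ρ : ℝ) (n : ℤ) :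
    (if sturm ρ α n = 0 then 1 else 0 : ℤ) = 1 - (⌊ρ + (n + 1 : ℤ) * α⌋ - ⌊ρ + n * α⌋) := by
  rw [Int.cast_add, Int.cast_one, add_one_mul, ← add_assoc,
    Int.floor_add_sub_floor_eq_ite hα0 hα1, sturm]
  split_ifs <;> simp_all

lemma zeroCount_sturm {α : ℝ} (hα0 : 0 ≤ α) (hα1 : α ≤ 1) (ρ : ℝ) {p q : ℤ} (h : p - 1 ≤ q) :
    zeroCount (sturm ρ α) p q = (q + 1 - p) - (⌊ρ + (q + 1 : ℤ) * α⌋ - ⌊ρ + p * α⌋) := by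
  induction q, h using Int.leInduction with
  | base => simp [zeroCount_sub_one]
  | succ q hq ih =>
    rw [zeroCount_add_one _ (by omega), ih, ite_sturm_eq_one_sub_floor_sub_floor hα0 hα1]
    ring

lemma abs_floor_sub_floor_sub_le_one (ρ ρ' x y : ℝ) :
    |(⌊ρ' + x⌋ - ⌊ρ + x⌋) - (⌊ρ' + y⌋ - ⌊ρ + y⌋)| ≤ 1 := by
  suffices |((⌊ρ' + x⌋ - ⌊ρ + x⌋ - (⌊ρ' + y⌋ - ⌊ρ + y⌋) : ℤ) : ℝ)| < 2 by
    rw [← Int.cast_abs] at this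
    exact Int.lt_add_one_iff.mp (by exact_mod_cast this)
  rw [abs_lt]
  push_cast
  constructor <;>
    linarith [Int.floor_le (ρ' + x), Int.floor_le (ρ + x), Int.floor_le (ρ' + y),
      Int.floor_le (ρ + y), Int.lt_floor_add_one (ρ' + x), Int.lt_floor_add_one (ρ + x),
      Int.lt_floor_add_one (ρ' + y), Int.lt_floor_add_one (ρ + y)]

/-- Two Sturmian words with the same slope are at balance distance at most one. -/
theorem sturmian_same_slope_distLE1 (α : ℝ) (hα : α ∈ Set.Icc (0:ℝ) 1) (ρ ρ' : ℝ) :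
    distLE1 (sturm ρ α) (sturm ρ' α) := by
  obtain ⟨hα0, hα1⟩ := hα
  intro p q hpq
  rw [zeroCount_sturm hα0 hα1 ρ (by omega), zeroCount_sturm hα0 hα1 ρ' (by omega)]
  convert abs_floor_sub_floor_sub_le_one ρ ρ' ((q + 1 : ℤ) * α) (p * α) using 2
  ring
end

section
/- Two bi-infinite words u, v : ℤ → {0,1} satisfy d(u,v) ≤ 1 (balance metric) if and only if v can be obtained from u by performing letter replacements 0→1 or 1→0 such that no two consecutive replacements (in position order) have the same type. -/
open Finset

section IntervalSums

def ConsecutiveNonzeroDistinct (f : ℤ → ℤ) : Prop :=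
  ∀ p q, p < q → f p ≠ 0 → f q ≠ 0 → (∀ i, p < i → i < q → f i = 0) → f p ≠ f q

variable {f : ℤ → ℤ}

theorem sum_Icc_eq_add_of_eq_zero_between {p q : ℤ} (hpq : p < q)
    (hmid : ∀ i, p < i → i < q → f i = 0) : ∑ i ∈ Icc p q, f i = f p + f q :=
  sum_eq_add_of_mem p q (by simp [hpq.le]) (by simp [hpq.le]) hpq.ne fun i hi hne =>
    hmid i (lt_of_le_of_ne (mem_Icc.1 hi).1 (Ne.symm hne.1))
      (lt_of_le_of_ne (mem_Icc.1 hi).2 hne.2)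

theorem consecutiveNonzeroDistinct_of_forall_abs_sum_Icc_le_one
    (hf : ∀ p q, p ≤ q → |∑ i ∈ Icc p q, f i| ≤ 1) : ConsecutiveNonzeroDistinct f := by
  intro p q hpq hp _ hmid hpq'
  have h := hf p q hpq.le
  rw [sum_Icc_eq_add_of_eq_zero_between hpq hmid, ← hpq', abs_le] at h
  omega

theorem sum_Icc_eq_zero_or_eq_last_nonzero (hf : ∀ i, |f i| ≤ 1)
    (halt : ConsecutiveNonzeroDistinct f) (p : ℤ) {q : ℤ} (hpq : p - 1 ≤ q) :
    ∑ i ∈ Icc p q, f i = 0 ∨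
      ∃ j ≤ q, f j ≠ 0 ∧ ∑ i ∈ Icc p q, f i = f j ∧ ∀ i, j < i → i ≤ q → f i = 0 := by
  induction q, hpq using Int.leInduction with
  | base => left; simp
  | succ q hpq ih =>
    rw [← insert_Icc_right_eq_Icc_add_one (by omega), sum_insert (by simp)]
    by_cases hq : f (q + 1) = 0
    · rw [hq, zero_add]
      refine ih.imp_right fun ⟨j, hjq, hj, hsum, hzero⟩ =>
        ⟨j, by omega, hj, hsum, fun i hji hiq => ?_⟩
      obtain hiq | rfl := Int.le_add_one_iff.1 hiq
      exacts [hzero i hji hiq, hq]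
    obtain hzero | ⟨j, hjq, hj, hsum, hmid⟩ := ih
    · exact Or.inr ⟨q + 1, le_rfl, hq, by rw [hzero, add_zero], fun i h h' => absurd h' h.not_ge⟩
    · -- `j` and `q + 1` are consecutive nonzeros, so `f j = -f (q + 1)`
      have hne := halt j (q + 1) (by omega) hj hq fun i hji hiq => hmid i hji (by omega)
      have := abs_le.1 (hf j)
      have := abs_le.1 (hf (q + 1))
      left
      omega

theorem abs_sum_Icc_le_one_of_consecutiveNonzeroDistinct (hf : ∀ i, |f i| ≤ 1)
    (halt : ConsecutiveNonzeroDistinct f) {p q : ℤ} (hpq : p ≤ q) :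
    |∑ i ∈ Icc p q, f i| ≤ 1 := by
  obtain h | ⟨j, -, -, h, -⟩ := sum_Icc_eq_zero_or_eq_last_nonzero hf halt p (by omega : p - 1 ≤ q)
  · simp [h]
  · exact h ▸ hf j

theorem forall_abs_sum_Icc_le_one_iff (hf : ∀ i, |f i| ≤ 1) :
    (∀ p q, p ≤ q → |∑ i ∈ Icc p q, f i| ≤ 1) ↔ ConsecutiveNonzeroDistinct f :=
  ⟨consecutiveNonzeroDistinct_of_forall_abs_sum_Icc_le_one,
    fun halt _ _ => abs_sum_Icc_le_one_of_consecutiveNonzeroDistinct hf halt⟩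

end IntervalSums

section LetterDiff

variable (u v : ℤ → Fin 2)

/-- Equal to `[u i = 0] - [v i = 0]`. -/
def letterDiff (i : ℤ) : ℤ := ((v i : ℕ) : ℤ) - (u i : ℕ)

theorem zeroCount_sub_zeroCount (p q : ℤ) :
    zeroCount u p q - zeroCount v p q = ∑ i ∈ Icc p q, letterDiff u v i := by
  rw [zeroCount, zeroCount, card_filter, card_filter]
  push_cast
  rw [← sum_sub_distrib]
  refine sum_congr rfl fun i _ => ?_
  rw [letterDiff]
  generalize u i = a, v i = b
  revert a b
  decide

theorem abs_letterDiff_le_one (i : ℤ) : |letterDiff u v i| ≤ 1 := by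
  rw [letterDiff]
  generalize u i = a, v i = b
  revert a b
  decide

theorem letterDiff_eq_zero_iff (i : ℤ) : letterDiff u v i = 0 ↔ u i = v i := by
  rw [letterDiff]
  generalize u i = a, v i = b
  revert a b
  decide

theorem letterDiff_eq_letterDiff_iff {p : ℤ} (hp : u p ≠ v p) (q : ℤ) :
    letterDiff u v p = letterDiff u v q ↔ (u p, v p) = (u q, v q) := by
  rw [letterDiff, letterDiff]
  generalize u p = a, v p = b, u q = c, v q = d at hp ⊢
  revert a b c d
  decide

end LetterDiff

/-- `d(u,v) ≤ 1` iff `v` is obtained from `u` by replacements whose types alternate. -/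
theorem distLE1_iff_alternating (u v : ℤ → Fin 2) :
    distLE1 u v ↔
      ∀ p q : ℤ, p < q → u p ≠ v p → u q ≠ v q →
        (∀ i : ℤ, p < i → i < q → u i = v i) → (u p, v p) ≠ (u q, v q) := by
  simp only [distLE1, zeroCount_sub_zeroCount,
    forall_abs_sum_Icc_le_one_iff (abs_letterDiff_le_one u v),
    ConsecutiveNonzeroDistinct, ne_eq, letterDiff_eq_zero_iff]
  refine forall₂_congr fun p q => imp_congr_right fun _ => forall_congr' fun hp => ?_
  rw [letterDiff_eq_letterDiff_iff u v hp]
end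

section
/- Let u, v : ℤ → {0,1} with d(u,v) ≤ 1 and u ≠ v. Then there exists a unique word w : ℤ → {0,1} encoding the replacements transforming u into v, in the sense that: for every i ∈ ℤ, u(i) ≠ v(i) if and only if w(i) ≠ w(i+1), and moreover whenever u(i) ≠ v(i), one has w(i) = u(i) and w(i+1) = v(i). -/
/-!
Letter by letter, `w` codes the replacement at `i` exactly when
`zeroInd (w i) - zeroInd (w (i+1)) = zeroInd (u i) - zeroInd (v i)`. For a discrete primitive
`P` of the right-hand side, the zero-count difference of `u` and `v` on `[p, q]` is
`P (q+1) - P p`, so `d(u,v) ≤ 1` confines `P` to two adjacent values `m`, `m+1`, and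
`zeroInd (w i) = m + 1 - P i` defines a coding. Two codings differ in `zeroInd` by a constant,
which vanishes at a position where `u` and `v` differ, since both codings switch letters there.
-/

open Finset

def zeroInd (a : Fin 2) : ℤ := if a = 0 then 1 else 0

lemma zeroInd_injective : Function.Injective zeroInd := by decide

lemma eq_of_zeroInd_sub_eq {a b a' b' : Fin 2}
    (h : zeroInd a - zeroInd b = zeroInd a' - zeroInd b') (hab : zeroInd a - zeroInd b ≠ 0) :
    a = a' := by
  revert a b a' b'; decide

lemma coding_letters_iff (a b c d : Fin 2) :
    ((a ≠ b ↔ c ≠ d) ∧ (a ≠ b → c = a ∧ d = b)) ↔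
      zeroInd c - zeroInd d = zeroInd a - zeroInd b := by
  revert a b c d; decide

section Primitive

variable {G : Type*} [AddCommGroup G]

lemma exists_forall_add_one_eq_add (φ : ℤ → G) : ∃ P : ℤ → G, ∀ i, P (i + 1) = P i + φ i := by
  refine ⟨fun i => ∑ k ∈ Ico 0 i, φ k - ∑ k ∈ Ico i 0, φ k, fun i => ?_⟩
  dsimp only
  rcases le_or_gt 0 i with hi | hi
  · simp [Ico_eq_empty_of_le hi, Ico_eq_empty_of_le (by omega : (0 : ℤ) ≤ i + 1),
      ← sum_Ico_add_eq_sum_Ico_add_one hi]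
  · rw [← insert_Ico_add_one_left_eq_Ico hi, sum_insert (by simp)]
    simp [Ico_eq_empty_of_le hi.le, Ico_eq_empty_of_le (by omega : i + 1 ≤ 0)]

lemma sum_Ico_eq_sub_of_forall_add_one_eq_add {φ P : ℤ → G} (hP : ∀ i, P (i + 1) = P i + φ i)
    {p r : ℤ} (hpr : p ≤ r) : ∑ k ∈ Ico p r, φ k = P r - P p := by
  induction r, hpr using Int.leInduction with
  | base => simp
  | succ r hpr ih => rw [← sum_Ico_add_eq_sum_Ico_add_one hpr, ih, hP]; abel

end Primitive

lemma exists_forall_eq_or_eq_add_one {α : Type*} [Nonempty α] {P : α → ℤ}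
    (hP : ∀ i j, |P i - P j| ≤ 1) : ∃ m, ∀ i, P i = m ∨ P i = m + 1 := by
  obtain ⟨a⟩ := ‹Nonempty α›
  by_cases hlow : ∃ j, P j < P a
  · obtain ⟨j, hj⟩ := hlow
    refine ⟨P j, fun i => ?_⟩
    have hij := abs_le.mp (hP i j)
    have hia := abs_le.mp (hP i a)
    have haj := abs_le.mp (hP a j)
    omega
  · simp only [not_exists, not_lt] at hlow
    refine ⟨P a, fun i => ?_⟩
    have hia := abs_le.mp (hP i a)
    have hai := hlow i
    omega

section Coding

variable {φ : ℤ → ℤ}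

lemma exists_forall_zeroInd_sub_eq {P : ℤ → ℤ} (hP : ∀ i, P (i + 1) = P i + φ i)
    (hosc : ∀ i j, |P i - P j| ≤ 1) :
    ∃ w : ℤ → Fin 2, ∀ i, zeroInd (w i) - zeroInd (w (i + 1)) = φ i := by
  obtain ⟨m, hm⟩ := exists_forall_eq_or_eq_add_one hosc
  have hw : ∀ i, zeroInd (if P i = m then 0 else 1) = m + 1 - P i := fun i => by
    rcases hm i with h | h <;> simp [zeroInd, h]
  exact ⟨fun i => if P i = m then 0 else 1, fun i => by rw [hw, hw, hP]; ring⟩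

lemma eq_of_forall_zeroInd_sub_eq {w w' : ℤ → Fin 2}
    (hw : ∀ i, zeroInd (w i) - zeroInd (w (i + 1)) = φ i)
    (hw' : ∀ i, zeroInd (w' i) - zeroInd (w' (i + 1)) = φ i) {i₀ : ℤ} (hi₀ : φ i₀ ≠ 0) :
    w = w' := by
  set D : ℤ → ℤ := fun i => zeroInd (w i) - zeroInd (w' i)
  have hD : Function.Periodic D 1 := fun i => by
    simp only [D]
    linarith [hw i, hw' i]
  have hD_const : ∀ i, D i = D 0 := fun i => by simpa using hD.int_mul_eq i
  have hD₀ : D i₀ = 0 := by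
    rw [sub_eq_zero, eq_of_zeroInd_sub_eq ((hw i₀).trans (hw' i₀).symm) ((hw i₀).trans_ne hi₀)]
  funext i
  have hDi : D i = 0 := (hD_const i).trans ((hD_const i₀).symm.trans hD₀)
  exact zeroInd_injective (sub_eq_zero.mp hDi)

end Coding

lemma zeroCount_eq_sum (u : ℤ → Fin 2) (p q : ℤ) :
    zeroCount u p q = ∑ i ∈ Icc p q, zeroInd (u i) := by
  rw [zeroCount, natCast_card_filter]
  rfl

lemma zeroCount_sub_zeroCount_eq {u v : ℤ → Fin 2} {P : ℤ → ℤ}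
    (hP : ∀ i, P (i + 1) = P i + (zeroInd (u i) - zeroInd (v i))) {p q : ℤ} (hpq : p ≤ q) :
    zeroCount u p q - zeroCount v p q = P (q + 1) - P p := by
  rw [zeroCount_eq_sum, zeroCount_eq_sum, ← sum_sub_distrib, ← Ico_add_one_right_eq_Icc,
    sum_Ico_eq_sub_of_forall_add_one_eq_add hP (by omega)]

lemma abs_sub_le_one_of_distLE1 {u v : ℤ → Fin 2} (h : distLE1 u v) {P : ℤ → ℤ}
    (hP : ∀ i, P (i + 1) = P i + (zeroInd (u i) - zeroInd (v i))) (i j : ℤ) :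
    |P i - P j| ≤ 1 := by
  rcases lt_trichotomy i j with hij | rfl | hij
  · rw [abs_sub_comm, ← sub_add_cancel j 1, ← zeroCount_sub_zeroCount_eq hP (by omega)]
    exact h i (j - 1) (by omega)
  · simp
  · rw [← sub_add_cancel i 1, ← zeroCount_sub_zeroCount_eq hP (by omega)]
    exact h j (i - 1) (by omega)

/-- If `d(u,v) ≤ 1` and `u ≠ v`, the word coding the replacements transforming
`u` into `v` exists and is unique. -/
theorem coding_exists_unique (u v : ℤ → Fin 2) (h : distLE1 u v) (hne : u ≠ v) :
    ∃! w : ℤ → Fin 2,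
      (∀ i : ℤ, (u i ≠ v i ↔ w i ≠ w (i + 1))) ∧
      (∀ i : ℤ, u i ≠ v i → w i = u i ∧ w (i + 1) = v i) := by
  simp_rw [← forall_and, coding_letters_iff]
  obtain ⟨P, hP⟩ := exists_forall_add_one_eq_add fun i => zeroInd (u i) - zeroInd (v i)
  obtain ⟨i₀, hi₀⟩ := Function.ne_iff.mp hne
  have hφ₀ : zeroInd (u i₀) - zeroInd (v i₀) ≠ 0 := fun h₀ =>
    hi₀ (zeroInd_injective (sub_eq_zero.mp h₀))
  exact existsUnique_of_exists_of_unique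
    (exists_forall_zeroInd_sub_eq hP (abs_sub_le_one_of_distLE1 h hP))
    fun w w' hw hw' => eq_of_forall_zeroInd_sub_eq hw hw' hφ₀
end
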